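/- Let (Ω, F, μ) be a probability space and let A, B ⊆ Ω be measurable events, where A represents the event {T = 1} (intervention alters both deep and surface structure) and B represents the event {Ŷ = 1} (the model's output changes after intervention). Assume μ(A) = μ(Aᶜ) = 1/2, μ(A ∩ B) > 0, and μ(Aᶜ ∩ Bᶜ) > 0. Define the approximated direct causal effect δ_ADCE = μ(B | A) − μ(B | Aᶜ), the probability of necessity δ_PN = (μ(Bᶜ) − μ(Bᶜ | A)) / μ(Aᶜ ∩ Bᶜ), the probability of sufficiency δ_PS = (μ(Bᶜ | Aᶜ) − μ(Bᶜ)) / μ(A ∩ B), and set α = μ(B | A) and β = μ(Bᶜ | Aᶜ). Then δ_ADCE = (α/2)·δ_PS + (β/2)·δ_PN. -/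

import Mathlib

/-!
Write α = μ(B | A) and β = μ(Bᶜ | Aᶜ), so that δ_ADCE = α - (1 - β). Since μ(A) = μ(Aᶜ) = 1/2,
the law of total probability makes μ(Bᶜ) the average of μ(Bᶜ | A) = 1 - α and β; hence the
numerators of δ_PS and δ_PN both equal (α + β - 1)/2, while their denominators are
μ(A ∩ B) = α/2 and μ(Aᶜ ∩ Bᶜ) = β/2. Each of the two weighted terms is therefore (α + β - 1)/2.
-/

open MeasureTheory

/-- Conditional probability μ(B | A) = μ(A ∩ B) / μ(A), as a real number. -/
noncomputable def condProb {Ω : Type*} [MeasurableSpace Ω] (μ : Measure Ω) (A B : Set Ω) : ℝ :=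
  (μ (A ∩ B)).toReal / (μ A).toReal

section condProb

variable {Ω : Type*} [MeasurableSpace Ω] (μ : Measure Ω) [IsFiniteMeasure μ]

theorem toReal_measure_inter_eq_condProb_mul (A B : Set Ω) :
    (μ (A ∩ B)).toReal = condProb μ A B * (μ A).toReal := by
  rcases eq_or_ne (μ A) 0 with hA | hA
  · simp [measure_mono_null Set.inter_subset_left hA, hA]
  · rw [condProb, div_mul_cancel₀]
    exact ENNReal.toReal_ne_zero.mpr ⟨hA, measure_ne_top μ A⟩

theorem toReal_measure_eq_condProb_add_condProb_compl {A : Set Ω} (hA : MeasurableSet A)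
    (B : Set Ω) :
    (μ B).toReal = condProb μ A B * (μ A).toReal + condProb μ Aᶜ B * (μ Aᶜ).toReal := by
  rw [← toReal_measure_inter_eq_condProb_mul, ← toReal_measure_inter_eq_condProb_mul,
    ← ENNReal.toReal_add (measure_ne_top μ _) (measure_ne_top μ _), Set.inter_comm A,
    Set.inter_comm Aᶜ, ← Set.sdiff_eq, measure_inter_add_sdiff B hA]

theorem condProb_compl {A B : Set Ω} (hB : MeasurableSet B) (hA : μ A ≠ 0) :
    condProb μ A Bᶜ = 1 - condProb μ A B := by
  have hsplit : (μ (A ∩ B)).toReal + (μ (A ∩ Bᶜ)).toReal = (μ A).toReal := by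
    rw [← ENNReal.toReal_add (measure_ne_top μ _) (measure_ne_top μ _), ← Set.sdiff_eq,
      measure_inter_add_sdiff A hB]
  have hA_real : (μ A).toReal ≠ 0 := ENNReal.toReal_ne_zero.mpr ⟨hA, measure_ne_top μ A⟩
  rw [condProb, condProb, eq_sub_iff_add_eq, ← add_div, add_comm, hsplit, div_self hA_real]

end condProb

/-- Theorem 1 (ADCE as a combination of PN and PS): with μ(T=1) = μ(T=0) = 1/2,
δ_ADCE = (α/2)·δ_PS + (β/2)·δ_PN, where α = μ(Ŷ=1 | T=1) and β = μ(Ŷ=0 | T=0). -/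
theorem adce_eq_ps_pn_combination {Ω : Type*} [MeasurableSpace Ω]
    (μ : Measure Ω) [IsProbabilityMeasure μ] (A B : Set Ω)
    (hA : MeasurableSet A) (hB : MeasurableSet B)
    (hA2 : μ A = 1 / 2) (hAc2 : μ Aᶜ = 1 / 2)
    (hAB : 0 < μ (A ∩ B)) (hAcBc : 0 < μ (Aᶜ ∩ Bᶜ)) :
    condProb μ A B - condProb μ Aᶜ B =
      (condProb μ A B / 2) *
        ((condProb μ Aᶜ Bᶜ - (μ Bᶜ).toReal) / (μ (A ∩ B)).toReal) +
      (condProb μ Aᶜ Bᶜ / 2) *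
        (((μ Bᶜ).toReal - condProb μ A Bᶜ) / (μ (Aᶜ ∩ Bᶜ)).toReal) := by
  have hA_half : (μ A).toReal = 1 / 2 := by simp [hA2]
  have hAc_half : (μ Aᶜ).toReal = 1 / 2 := by simp [hAc2]
  set α := condProb μ A B
  set β := condProb μ Aᶜ Bᶜ
  have hAB_eq : (μ (A ∩ B)).toReal = α / 2 := by
    rw [toReal_measure_inter_eq_condProb_mul, hA_half]; ring
  have hAcBc_eq : (μ (Aᶜ ∩ Bᶜ)).toReal = β / 2 := by
    rw [toReal_measure_inter_eq_condProb_mul, hAc_half]; ring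
  have hα : α ≠ 0 := by
    have := ENNReal.toReal_pos hAB.ne' (measure_ne_top μ _); linarith
  have hβ : β ≠ 0 := by
    have := ENNReal.toReal_pos hAcBc.ne' (measure_ne_top μ _); linarith
  have hA_Bc : condProb μ A Bᶜ = 1 - α := condProb_compl μ hB (by simp [hA2])
  have hAc_B : condProb μ Aᶜ B = 1 - β := by
    have := condProb_compl μ hB (A := Aᶜ) (by simp [hAc2]); linarith
  have hBc : (μ Bᶜ).toReal = (1 - α + β) / 2 := by
    rw [toReal_measure_eq_condProb_add_condProb_compl μ hA, hA_half, hAc_half, hA_Bc]; ring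
  rw [hAc_B, hBc, hAB_eq, hAcBc_eq, hA_Bc]
  field_simp
  ring
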